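/- Let z_s, z_m ∈ ℂ with z_s ≠ 0, and let Z be the balanced 4×4 complex matrix with Z i i = z_s for all i and Z i j = z_m for all i ≠ j. Then the Kron-reduced matrix Z^Kr = Z_pp − (1/Z_nn)·Z_pn·Z_np (Z_pp the top-left 3×3 block, Z_pn the phase–neutral column, Z_np the neutral–phase row, Z_nn = z_s) is again balanced: all its diagonal entries equal z_s − z_m²/z_s and all its off-diagonal entries equal z_m − z_m²/z_s. -/
import Mathlib


open Matrix

/-- Kron's reduction of a balanced 4×4 matrix is again balanced, with
diagonal entries z_s − z_m²/z_s and off-diagonal entries z_m − z_m²/z_s. -/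
theorem kron_reduction_balanced (zs zm : ℂ) (hzs : zs ≠ 0)
    (Z : Matrix (Fin 4) (Fin 4) ℂ)
    (hZ : ∀ i j, Z i j = if i = j then zs else zm)
    (ZKr : Matrix (Fin 3) (Fin 3) ℂ)
    (hZKr : ∀ i j : Fin 3, ZKr i j =
      Z i.castSucc j.castSucc - (1 / Z 3 3) * (Z i.castSucc 3 * Z 3 j.castSucc)) :
    ∀ i j : Fin 3, ZKr i j = if i = j then zs - zm^2 / zs else zm - zm^2 / zs := by
  intro i j
  have hc3 : ∀ k : Fin 3, k.castSucc ≠ (3 : Fin 4) := by decide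
  have hcast : ∀ k l : Fin 3, (k.castSucc = l.castSucc) ↔ k = l := by decide
  rw [hZKr, hZ, hZ, hZ, hZ]
  simp only [hc3, (hc3 i).symm ∘ Eq.symm, if_neg, hcast, if_pos rfl]
  have h3 : ¬((3 : Fin 4) = j.castSucc) := fun h => hc3 j h.symm
  rw [if_neg h3]
  by_cases h : i = j
  · simp [h, div_eq_mul_inv, sq]; ring
  · simp [h, div_eq_mul_inv, sq]; ring
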